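/- Let (M, φ, ξ, η, g) be a nearly Sasakian manifold of dimension 2n+1. Then η ∧ (dη)ⁿ is nowhere vanishing on M, i.e. η is a contact form and M is a contact manifold. -/

import Mathlib

/-!
An algebraic model of the differential calculus on a (parallelizable) smooth
manifold: `M` is the type of points, `V` is the model for the tangent spaces,
smooth functions are modelled by maps `M → ℝ` and vector fields by maps
`M → V`.  The data consists of the directional derivative `D` of functions,
the Lie bracket `lie` of vector fields, a Riemannian metric `g` and its
Levi-Civita connection `nabla` (characterized, as usual, by being the unique
metric torsion-free connection).
-/

noncomputable section

structure RGeo (M V : Type) [AddCommGroup V] [Module ℝ V] : Type where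
  D : (M → V) → (M → ℝ) → (M → ℝ)
  lie : (M → V) → (M → V) → (M → V)
  g : M → V →ₗ[ℝ] V →ₗ[ℝ] ℝ
  nabla : (M → V) → (M → V) → (M → V)
  g_symm : ∀ x u v, g x u v = g x v u
  g_posdef : ∀ x (v : V), v ≠ 0 → 0 < g x v v
  D_add_fun : ∀ X f₁ f₂, D X (f₁ + f₂) = D X f₁ + D X f₂
  D_mul_fun : ∀ X f₁ f₂, D X (f₁ * f₂) = f₁ * D X f₂ + f₂ * D X f₁
  D_const : ∀ X (c : ℝ), D X (fun _ => c) = 0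
  D_add_vf : ∀ X Y f, D (X + Y) f = D X f + D Y f
  D_smul_vf : ∀ (f : M → ℝ) X φ, D (fun x => f x • X x) φ = f * D X φ
  lie_antisymm : ∀ X Y, lie X Y = -(lie Y X)
  lie_add_left : ∀ X Y Z, lie (X + Y) Z = lie X Z + lie Y Z
  lie_leibniz : ∀ X (f : M → ℝ) Y,
    lie X (fun x => f x • Y x) = fun x => D X f x • Y x + f x • lie X Y x
  D_lie : ∀ X Y f, D (lie X Y) f = D X (D Y f) - D Y (D X f)
  nabla_add_left : ∀ X Y Z, nabla (X + Y) Z = nabla X Z + nabla Y Z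
  nabla_smul_left : ∀ (f : M → ℝ) X Y,
    nabla (fun x => f x • X x) Y = fun x => f x • nabla X Y x
  nabla_add_right : ∀ X Y Z, nabla X (Y + Z) = nabla X Y + nabla X Z
  nabla_leibniz : ∀ X (f : M → ℝ) Y,
    nabla X (fun x => f x • Y x) = fun x => D X f x • Y x + f x • nabla X Y x
  torsion_free : ∀ X Y, (fun x => nabla X Y x - nabla Y X x) = lie X Y
  metric_compat : ∀ X Y Z,
    D X (fun x => g x (Y x) (Z x)) =
      fun x => g x (nabla X Y x) (Z x) + g x (Y x) (nabla X Z x)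

namespace RGeo

variable {M V : Type} [AddCommGroup V] [Module ℝ V]

/-- The metric evaluated on two vector fields. -/
def gf (Γ : RGeo M V) (X Y : M → V) : M → ℝ := fun x => Γ.g x (X x) (Y x)

/-- Application of a `(1,1)`-tensor field to a vector field. -/
def tapp (A : M → V →ₗ[ℝ] V) (X : M → V) : M → V := fun x => A x (X x)

/-- The covariant derivative `(∇_X A) Y` of a `(1,1)`-tensor field `A`. -/
def covDer (Γ : RGeo M V) (A : M → V →ₗ[ℝ] V) (X Y : M → V) : M → V :=
  fun x => Γ.nabla X (tapp A Y) x - A x (Γ.nabla X Y x)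

/-- The constant vector field with value `v`. -/
def cst (M : Type) {V : Type} [AddCommGroup V] [Module ℝ V] (v : V) : M → V := fun _ => v

/-- The Riemann curvature operator `R(X,Y)Z`. -/
def curv (Γ : RGeo M V) (X Y Z : M → V) : M → V :=
  fun x => Γ.nabla X (Γ.nabla Y Z) x - Γ.nabla Y (Γ.nabla X Z) x - Γ.nabla (Γ.lie X Y) Z x

/-- A family of vectors is orthonormal at the point `x`. -/
def OrthonormalAt (Γ : RGeo M V) (x : M) {n : ℕ} (e : Fin n → V) : Prop :=
  ∀ i j, Γ.g x (e i) (e j) = if i = j then (1 : ℝ) else 0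

/-- The Ricci tensor at `x`, computed with respect to a frame orthonormal at `x`. -/
def ricciAt (Γ : RGeo M V) (x : M) {n : ℕ} (e : Fin n → V) (u v : V) : ℝ :=
  ∑ i, Γ.g x (curv Γ (cst M (e i)) (cst M u) (cst M v) x) (e i)

/-- The scalar curvature at `x`, computed with respect to a frame orthonormal at `x`. -/
def scalarAt (Γ : RGeo M V) (x : M) {n : ℕ} (e : Fin n → V) : ℝ :=
  ∑ i, ∑ j, Γ.g x (curv Γ (cst M (e i)) (cst M (e j)) (cst M (e j)) x) (e i)

/-- Exterior derivative of a 1-form (given by its values on vector fields). -/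
def dOne (Γ : RGeo M V) (a : (M → V) → M → ℝ) (X Y : M → V) : M → ℝ :=
  Γ.D X (a Y) - Γ.D Y (a X) - a (Γ.lie X Y)

/-- Exterior derivative of a 2-form (given by its values on vector fields). -/
def dTwo (Γ : RGeo M V) (ω : (M → V) → (M → V) → M → ℝ) (X Y Z : M → V) : M → ℝ :=
  Γ.D X (ω Y Z) - Γ.D Y (ω X Z) + Γ.D Z (ω X Y)
    - ω (Γ.lie X Y) Z + ω (Γ.lie X Z) Y - ω (Γ.lie Y Z) X

/-- Exterior derivative of a 3-form (given by its values on vector fields). -/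
def dThree (Γ : RGeo M V) (c : (M → V) → (M → V) → (M → V) → M → ℝ)
    (X Y Z W : M → V) : M → ℝ :=
  Γ.D X (c Y Z W) - Γ.D Y (c X Z W) + Γ.D Z (c X Y W) - Γ.D W (c X Y Z)
    - c (Γ.lie X Y) Z W + c (Γ.lie X Z) Y W - c (Γ.lie X W) Y Z
    - c (Γ.lie Y Z) X W + c (Γ.lie Y W) X Z - c (Γ.lie Z W) X Y

/-- Wedge product of a 1-form and a 2-form, on vector fields. -/
def w12 (a : (M → V) → M → ℝ) (b : (M → V) → (M → V) → M → ℝ)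
    (X Y Z : M → V) : M → ℝ :=
  a X * b Y Z - a Y * b X Z + a Z * b X Y

/-- Wedge product of two 2-forms, on vector fields. -/
def w22 (b c : (M → V) → (M → V) → M → ℝ) (X Y Z W : M → V) : M → ℝ :=
  b X Y * c Z W - b X Z * c Y W + b X W * c Y Z
    + b Y Z * c X W - b Y W * c X Z + b Z W * c X Y

/-- An almost contact metric structure `(φ, ξ, η, g)`. -/
structure ACMS (Γ : RGeo M V) : Type where
  phi : M → V →ₗ[ℝ] V
  xi : M → V
  eta : M → V →ₗ[ℝ] ℝ
  phi_sq : ∀ x (v : V), phi x (phi x v) = -v + eta x v • xi x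
  eta_xi : ∀ x, eta x (xi x) = 1
  metric_phi : ∀ x (u v : V),
    Γ.g x (phi x u) (phi x v) = Γ.g x u v - eta x u * eta x v

variable {Γ : RGeo M V}

/-- `η` evaluated on vector fields. -/
def ACMS.etaf (S : ACMS Γ) : (M → V) → M → ℝ := fun X x => S.eta x (X x)

/-- `φ` applied to a vector field. -/
def ACMS.phif (S : ACMS Γ) : (M → V) → M → V := fun X x => S.phi x (X x)

/-- The fundamental 2-form `Φ(X,Y) = g(φX, Y)`, on vector fields. -/
def ACMS.omegaf (S : ACMS Γ) : (M → V) → (M → V) → M → ℝ :=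
  fun X Y x => Γ.g x (S.phi x (X x)) (Y x)

/-- Nearly Sasakian structure: `(∇_X φ)Y + (∇_Y φ)X = 2g(X,Y)ξ − η(X)Y − η(Y)X`. -/
def ACMS.IsNearlySasakian (S : ACMS Γ) : Prop :=
  ∀ X Y : M → V, ∀ x,
    covDer Γ S.phi X Y x + covDer Γ S.phi Y X x
      = (2 * Γ.g x (X x) (Y x)) • S.xi x - S.eta x (X x) • Y x - S.eta x (Y x) • X x

/-- Sasakian structure: `(∇_X φ)Y = g(X,Y)ξ − η(Y)X`. -/
def ACMS.IsSasakian (S : ACMS Γ) : Prop :=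
  ∀ X Y : M → V, ∀ x,
    covDer Γ S.phi X Y x = Γ.g x (X x) (Y x) • S.xi x - S.eta x (Y x) • X x

/-- Nearly cosymplectic structure: `(∇_X φ)Y + (∇_Y φ)X = 0`. -/
def ACMS.IsNearlyCosymplectic (S : ACMS Γ) : Prop :=
  ∀ X Y : M → V, ∀ x, covDer Γ S.phi X Y x + covDer Γ S.phi Y X x = 0

/-- coKähler structure: `∇φ = 0`. -/
def ACMS.IsCoKaehler (S : ACMS Γ) : Prop :=
  ∀ X Y : M → V, ∀ x, covDer Γ S.phi X Y x = 0

/-- Nearly α-Sasakian structure. -/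
def ACMS.IsNearlyAlphaSasakian (S : ACMS Γ) (α : ℝ) : Prop :=
  ∀ X Y : M → V, ∀ x,
    covDer Γ S.phi X Y x + covDer Γ S.phi Y X x
      = α • ((2 * Γ.g x (X x) (Y x)) • S.xi x - S.eta x (X x) • Y x - S.eta x (Y x) • X x)

/-- `h` is the tensor of the nearly Sasakian structure `S`: `∇_X ξ = −φX + hX`. -/
def ACMS.IsNSTensor (S : ACMS Γ) (h : M → V →ₗ[ℝ] V) : Prop :=
  ∀ X : M → V, ∀ x, Γ.nabla X S.xi x = -(S.phi x (X x)) + h x (X x)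

/-- `h` is the tensor of the nearly cosymplectic structure `S`: `∇_X ξ = hX`. -/
def ACMS.IsNCTensor (S : ACMS Γ) (h : M → V →ₗ[ℝ] V) : Prop :=
  ∀ X : M → V, ∀ x, Γ.nabla X S.xi x = h x (X x)

/-- A vector field is a section of a distribution. -/
def Sect (Dst : M → Submodule ℝ V) (X : M → V) : Prop := ∀ x, X x ∈ Dst x

/-- A distribution is integrable (involutive). -/
def IsIntegrable (Γ : RGeo M V) (Dst : M → Submodule ℝ V) : Prop :=
  ∀ X Y, Sect Dst X → Sect Dst Y → Sect Dst (Γ.lie X Y)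

/-- A distribution defines a totally geodesic foliation: it is closed under
covariant differentiation along its own sections. -/
def IsTotallyGeodesic (Γ : RGeo M V) (Dst : M → Submodule ℝ V) : Prop :=
  ∀ X Y, Sect Dst X → Sect Dst Y → Sect Dst (Γ.nabla X Y)

/-- The eigendistribution of `h²` for the eigenvalue `μ`. -/
def eigD (h : M → V →ₗ[ℝ] V) (μ : ℝ) : M → Submodule ℝ V :=
  fun x => Module.End.eigenspace (h x ∘ₗ h x) μ

/-- `(i,j,k)` is an even permutation of `(1,2,3)` (here of `(0,1,2)`). -/
def EvenPerm (i j k : Fin 3) : Prop :=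
  (i, j, k) = (0, 1, 2) ∨ (i, j, k) = (1, 2, 0) ∨ (i, j, k) = (2, 0, 1)

/-- An `SU(2)`-structure on a 5-manifold, described by three almost contact
metric structures sharing `ξ`, `η`, `g` and satisfying the quaternionic
relations `φᵢφⱼ = φₖ = −φⱼφᵢ` for even permutations `(i,j,k)`. -/
structure SU2Triple (Γ : RGeo M V) : Type where
  S : Fin 3 → ACMS Γ
  same_xi : ∀ i j, (S i).xi = (S j).xi
  same_eta : ∀ i j, (S i).eta = (S j).eta
  quat : ∀ i j k, EvenPerm i j k → ∀ x (v : V),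
    (S i).phi x ((S j).phi x v) = (S k).phi x v ∧
    (S j).phi x ((S i).phi x v) = -((S k).phi x v)

/-- The tensor field `N_φ = [φ,φ] + dη ⊗ ξ`. -/
def nijenhuis (Γ : RGeo M V) (A : M → V →ₗ[ℝ] V) (eta : M → V →ₗ[ℝ] ℝ) (xi : M → V)
    (X Y : M → V) : M → V :=
  fun x => A x (A x (Γ.lie X Y x)) + Γ.lie (tapp A X) (tapp A Y) x
    - A x (Γ.lie (tapp A X) Y x) - A x (Γ.lie X (tapp A Y) x)
    + dOne Γ (fun Z y => eta y (Z y)) X Y x • xi x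

/-- Pointwise wedge product of two 2-forms on `V`, evaluated on four vectors. -/
def wedge22At (b c : V →ₗ[ℝ] V →ₗ[ℝ] ℝ) (p q r s : V) : ℝ :=
  b p q * c r s - b p r * c q s + b p s * c q r
    + b q r * c p s - b q s * c p r + b r s * c p q

/-- Pointwise wedge product of a 4-form and a 1-form on `V`, on five vectors. -/
def wedge41At (v4 : V → V → V → V → ℝ) (a : V →ₗ[ℝ] ℝ) (p q r s t : V) : ℝ :=
  a p * v4 q r s t - a q * v4 p r s t + a r * v4 p q s t
    - a s * v4 p q r t + a t * v4 p q r s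

end RGeo

/-- The data `(η, ω₁, ω₂, ω₃)` of a candidate `SU(2)`-structure on a 5-manifold:
a 1-form and three 2-forms (given pointwise). -/
structure SU2Forms (M V : Type) [AddCommGroup V] [Module ℝ V] : Type where
  eta : M → V →ₗ[ℝ] ℝ
  omega : Fin 3 → M → V →ₗ[ℝ] V →ₗ[ℝ] ℝ
  omega_alt : ∀ i x v, omega i x v v = 0

namespace SU2Forms

variable {M V : Type} [AddCommGroup V] [Module ℝ V]

/-- `(η, ω₁, ω₂, ω₃)` is an `SU(2)`-structure: `ωᵢ ∧ ωⱼ = δᵢⱼ v` for a 4-form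
`v` with `v ∧ η ≠ 0`, and `X⌟ω₁ = Y⌟ω₂` implies `ω₃(X,Y) ≥ 0`. -/
def IsSU2 (F : SU2Forms M V) : Prop :=
  (∃ v4 : M → V → V → V → V → ℝ,
    (∀ i j x p q r s, RGeo.wedge22At (F.omega i x) (F.omega j x) p q r s
        = (if i = j then (1 : ℝ) else 0) * v4 x p q r s) ∧
    (∀ x, ∃ p q r s t, RGeo.wedge41At (v4 x) (F.eta x) p q r s t ≠ 0)) ∧
  (∀ x (u w : V), (∀ z, F.omega 0 x u z = F.omega 1 x w z) → 0 ≤ F.omega 2 x u w)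

/-- `η` evaluated on vector fields. -/
def etaf (F : SU2Forms M V) : (M → V) → M → ℝ := fun X x => F.eta x (X x)

/-- `ωᵢ` evaluated on vector fields. -/
def omegaf (F : SU2Forms M V) (i : Fin 3) : (M → V) → (M → V) → M → ℝ :=
  fun X Y x => F.omega i x (X x) (Y x)

end SU2Forms

namespace RGeo

variable {M V : Type} [AddCommGroup V] [Module ℝ V]

/-- A linear connection on `(M, V, Γ)`. -/
structure ConnOf (Γ : RGeo M V) : Type where
  nb : (M → V) → (M → V) → (M → V)
  nb_add_left : ∀ X Y Z, nb (X + Y) Z = nb X Z + nb Y Z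
  nb_smul_left : ∀ (f : M → ℝ) X Y, nb (fun x => f x • X x) Y = fun x => f x • nb X Y x
  nb_add_right : ∀ X Y Z, nb X (Y + Z) = nb X Y + nb X Z
  nb_leibniz : ∀ X (f : M → ℝ) Y,
    nb X (fun x => f x • Y x) = fun x => Γ.D X f x • Y x + f x • nb X Y x

/-- The torsion of a linear connection. -/
def ConnOf.tors {Γ : RGeo M V} (C : ConnOf Γ) (X Y : M → V) : M → V :=
  fun x => C.nb X Y x - C.nb Y X x - Γ.lie X Y x

/-- The connection parallelizes all the structure tensors `g`, `ξ`, `φ`, `η`. -/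
def ConnOf.Parallelizes {Γ : RGeo M V} (C : ConnOf Γ) (S : ACMS Γ) : Prop :=
  (∀ X Y Z, Γ.D X (Γ.gf Y Z)
      = fun x => Γ.g x (C.nb X Y x) (Z x) + Γ.g x (Y x) (C.nb X Z x)) ∧
  (∀ X x, C.nb X S.xi x = 0) ∧
  (∀ X Y x, C.nb X (tapp S.phi Y) x = S.phi x (C.nb X Y x)) ∧
  (∀ X Y, Γ.D X (S.etaf Y) = fun x => S.eta x (C.nb X Y x))

end RGeo


/-!
At a point `x`, writing `η = g(ξ, ·)` gives `dη(u, w) = g(∇_u ξ, w) - g(∇_w ξ, u)`. On a nearly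
Sasakian manifold `ξ` is a Killing field and `∇_u ξ = -φu - φ((∇_ξ φ) u)`, so for a nonzero
`u ∈ ker η` we get `dη(u, ∇_u ξ) = 2 |∇_u ξ|² ≥ 2 |u|² > 0`: `dη` is nondegenerate on the
`2n`-dimensional space `ker η`. Complete a Darboux basis `(eᵢ, fᵢ)` of `ker η` by `ξ`. In the
alternating sum, a permutation contributes only if it fixes `ξ` and permutes the pairs
`{eᵢ, fᵢ}`; its sign and the product of the values of `dη` are then the same `±1`, so every
term is nonnegative, while the identity contributes `1`.
-/

open Equiv

/-- The Gram matrix of a Darboux basis, the `i`-th hyperbolic pair being `((i, 0), (i, 1))`. -/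
def stdSymplectic {n : ℕ} (p q : Fin n × Fin 2) : ℝ :=
  if p.1 = q.1 then (q.2 : ℕ) - (p.2 : ℕ) else 0

theorem stdSymplectic_succ_succ {n : ℕ} (i j : Fin n) (a c : Fin 2) :
    stdSymplectic (i.succ, a) (j.succ, c) = stdSymplectic (i, a) (j, c) := by
  simp only [stdSymplectic, Fin.succ_inj]

theorem stdSymplectic_perm_fin_two {n : ℕ} (i : Fin n) (s : Perm (Fin 2)) :
    stdSymplectic (i, s 0) (i, s 1) = (Perm.sign s : ℝ) := by
  have h : ∀ s : Perm (Fin 2), ((s 1 : ℕ) : ℤ) - (s 0 : ℕ) = Perm.sign s := by decide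
  rw [stdSymplectic, if_pos rfl, ← h s]
  push_cast
  rfl

theorem Equiv.Perm.exists_eq_prodCongrLeft_mul_prodCongrRight {α : Type*} [Finite α]
    (τ : Perm (α × Fin 2)) (hτ : ∀ i, (τ (i, 0)).1 = (τ (i, 1)).1) :
    ∃ (π : Perm α) (s : α → Perm (Fin 2)),
      τ = prodCongrLeft (fun _ => π) * prodCongrRight s := by
  have hfst : ∀ i a, (τ (i, a)).1 = (τ (i, 0)).1 := by
    intro i a
    fin_cases a
    exacts [rfl, (hτ i).symm]
  have hs : ∀ i, Function.Bijective fun a => (τ (i, a)).2 := fun i =>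
    Finite.injective_iff_bijective.mp fun a a' h =>
      (Prod.ext_iff.mp (τ.injective (Prod.ext ((hfst i a).trans (hfst i a').symm) h))).2
  have hπ : Function.Bijective fun i => (τ (i, 0)).1 := by
    refine Finite.injective_iff_bijective.mp fun i j h => ?_
    obtain ⟨a, ha⟩ := (hs i).2 (τ (j, 0)).2
    exact congrArg Prod.fst (τ.injective (Prod.ext ((hfst i a).trans h) ha))
  refine ⟨ofBijective _ hπ, fun i => ofBijective _ (hs i), ?_⟩
  ext ⟨i, a⟩
  · exact hfst i a
  · rfl

theorem sign_mul_prod_stdSymplectic_nonneg {n : ℕ} (τ : Perm (Fin n × Fin 2)) :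
    0 ≤ (Perm.sign τ : ℝ) * ∏ i, stdSymplectic (τ (i, 0)) (τ (i, 1)) := by
  by_cases hτ : ∀ i, (τ (i, 0)).1 = (τ (i, 1)).1
  · obtain ⟨π, s, rfl⟩ := τ.exists_eq_prodCongrLeft_mul_prodCongrRight hτ
    simp only [Perm.mul_apply, prodCongrRight_apply, prodCongrLeft_apply,
      stdSymplectic_perm_fin_two, Perm.sign_mul, Perm.sign_prodCongrLeft,
      Perm.sign_prodCongrRight, Fin.prod_univ_two, Int.units_mul_self, one_mul]
    push_cast
    exact mul_self_nonneg _
  · obtain ⟨i, hi⟩ := not_forall.mp hτ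
    rw [Finset.prod_eq_zero (Finset.mem_univ i) (if_neg hi), mul_zero]

def finPairEquiv (n : ℕ) : Fin n × Fin 2 ≃ Fin (2 * n) :=
  finProdFinEquiv.trans (finCongr (Nat.mul_comm n 2))

theorem finPairEquiv_val {n : ℕ} (p : Fin n × Fin 2) :
    (finPairEquiv n p : ℕ) = 2 * p.1 + p.2 := by
  simp [finPairEquiv, add_comm]

theorem sum_sign_mul_prod_pos {n : ℕ} (α : Fin (2 * n + 1) → ℝ)
    (β : Fin (2 * n + 1) → Fin (2 * n + 1) → ℝ) (hα₀ : α 0 = 1)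
    (hα : ∀ k : Fin (2 * n), α k.succ = 0)
    (hβ : ∀ p q, β (finPairEquiv n p).succ (finPairEquiv n q).succ = stdSymplectic p q) :
    0 < ∑ σ : Perm (Fin (2 * n + 1)), (Perm.sign σ : ℝ) *
      (α (σ ⟨0, by omega⟩) *
        ∏ i : Fin n, β (σ ⟨2 * (i : ℕ) + 1, by have := i.isLt; omega⟩)
          (σ ⟨2 * (i : ℕ) + 2, by have := i.isLt; omega⟩)) := by
  have hidx : ∀ (i : Fin n) (a : Fin 2),
      (⟨2 * (i : ℕ) + a + 1, by have := i.isLt; have := a.isLt; omega⟩ : Fin (2 * n + 1)) =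
        (finPairEquiv n (i, a)).succ := fun i a => Fin.ext (by simp [finPairEquiv_val])
  have h₁ := fun i => hidx i 0
  have h₂ := fun i => hidx i 1
  simp only [Fin.val_zero, Fin.val_one, add_zero] at h₁ h₂
  simp only [h₁, h₂, show (⟨0, by omega⟩ : Fin (2 * n + 1)) = 0 from rfl]
  refine Finset.sum_pos' (fun σ _ => ?_) ⟨1, Finset.mem_univ _, ?_⟩
  · obtain ⟨⟨p, τ⟩, rfl⟩ := Perm.decomposeFin.symm.surjective σ
    rcases Fin.eq_zero_or_eq_succ p with rfl | ⟨k, rfl⟩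
    · have hτ : ∀ q, Perm.decomposeFin.symm (0, τ) (finPairEquiv n q).succ =
          (finPairEquiv n ((finPairEquiv n).symm.permCongr τ q)).succ := by
        simp [Perm.decomposeFin_symm_apply_succ]
      simp only [Perm.decomposeFin_symm_apply_zero, hα₀, one_mul, hτ, hβ,
        Perm.decomposeFin.symm_sign]
      simpa using sign_mul_prod_stdSymplectic_nonneg ((finPairEquiv n).symm.permCongr τ)
    · simp [Perm.decomposeFin_symm_apply_zero, hα]
  · simp [hα₀, hβ, stdSymplectic]

namespace LinearMap

variable {E : Type*} [AddCommGroup E] [Module ℝ E] {B : E →ₗ[ℝ] E →ₗ[ℝ] ℝ}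

def orthogonalPair (B : E →ₗ[ℝ] E →ₗ[ℝ] ℝ) (u w : E) : Submodule ℝ E :=
  ker ((B u).prod (B w))

theorem finrank_orthogonalPair_add_two [FiniteDimensional ℝ E] (hB : B.IsAlt) {u w : E}
    (huw : B u w = 1) : Module.finrank ℝ (B.orthogonalPair u w) + 2 = Module.finrank ℝ E := by
  have hsurj : Function.Surjective ((B u).prod (B w)) := fun ⟨a, b⟩ =>
    ⟨a • w - b • u, by simp [hB.self_eq_zero, ← hB.neg u w, huw]⟩
  have := finrank_range_add_finrank_ker ((B u).prod (B w))
  rw [range_eq_top.mpr hsurj, finrank_top, Module.finrank_prod, Module.finrank_self] at this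
  unfold orthogonalPair
  omega

theorem separatingLeft_orthogonalPair (hB : B.IsAlt) (hsep : B.SeparatingLeft) {u w : E}
    (huw : B u w = 1) :
    (B.compl₁₂ (B.orthogonalPair u w).subtype (B.orthogonalPair u w).subtype).SeparatingLeft := by
  rintro ⟨z, hz⟩ hzK
  have hzu : B z u = 0 := by simpa [← hB.neg u z] using congrArg Prod.fst hz
  have hzw : B z w = 0 := by simpa [← hB.neg w z] using congrArg Prod.snd hz
  refine Subtype.ext (hsep z fun y => ?_)
  -- project `y` onto the orthogonal complement of the pair along `span {u, w}`
  have hy : y - B u y • w + B w y • u ∈ B.orthogonalPair u w := by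
    simp [orthogonalPair, hB.self_eq_zero, ← hB.neg u w, huw]
  simpa [hzu, hzw] using hzK ⟨_, hy⟩

theorem exists_darboux_frame [FiniteDimensional ℝ E] (hB : B.IsAlt) (hsep : B.SeparatingLeft)
    (m : ℕ) (hE : Module.finrank ℝ E = 2 * m) :
    ∃ b : Fin m × Fin 2 → E, ∀ p q, B (b p) (b q) = stdSymplectic p q := by
  induction m generalizing E with
  | zero => exact ⟨fun p => p.1.elim0, fun p => p.1.elim0⟩
  | succ m ih =>
    obtain ⟨u, hu⟩ :=
      Module.finrank_pos_iff_exists_ne_zero.mp (by omega : 0 < Module.finrank ℝ E)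
    obtain ⟨w, hw⟩ : ∃ w, B u w ≠ 0 := by
      by_contra! h
      exact hu (hsep u h)
    set w₁ := (B u w)⁻¹ • w
    have huw : B u w₁ = 1 := by simp [w₁, hw]
    set K := B.orthogonalPair u w₁
    have hK : Module.finrank ℝ K + 2 = _ := finrank_orthogonalPair_add_two hB huw
    obtain ⟨b, hb⟩ := ih (B := B.compl₁₂ K.subtype K.subtype) (fun z => hB z)
      (separatingLeft_orthogonalPair hB hsep huw) (by omega)
    refine ⟨fun p => Fin.cons (α := fun _ => E) (![u, w₁] p.2) (fun j => (b (j, p.2) : E)) p.1,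
      ?_⟩
    have hKu : ∀ z : K, B u z = 0 ∧ B w₁ z = 0 := fun z => by
      simpa [K, orthogonalPair] using z.2
    have hKu' : ∀ z : K, B z u = 0 ∧ B z w₁ = 0 := fun z => by
      simp [← hB.neg u z, ← hB.neg w₁ z, hKu]
    rintro ⟨i, a⟩ ⟨j, c⟩
    cases i using Fin.cases <;> cases j using Fin.cases
    · fin_cases a <;> fin_cases c <;> simp [stdSymplectic, hB.self_eq_zero, huw, ← hB.neg u w₁]
    · fin_cases a <;> simp [stdSymplectic, hKu, (Fin.succ_ne_zero _).symm]
    · fin_cases c <;> simp [stdSymplectic, hKu', Fin.succ_ne_zero]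
    · simpa [stdSymplectic_succ_succ] using hb _ _

end LinearMap

namespace RGeo

variable {M V : Type} [AddCommGroup V] [Module ℝ V] (Γ : RGeo M V)

theorem g_self_nonneg (x : M) (v : V) : 0 ≤ Γ.g x v v := by
  rcases eq_or_ne v 0 with rfl | hv
  · simp
  · exact (Γ.g_posdef x v hv).le

theorem nabla_zero (X : M → V) : Γ.nabla X 0 = 0 := by
  have h := Γ.nabla_leibniz X 0 0
  simp only [Pi.zero_apply, zero_smul, smul_zero, add_zero] at h
  exact h

theorem nabla_const_smul (X : M → V) (c : ℝ) (Y : M → V) :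
    Γ.nabla X (fun x => c • Y x) = fun x => c • Γ.nabla X Y x := by
  simp [Γ.nabla_leibniz X (fun _ => c) Y, Γ.D_const]

theorem covDer_skew {A : M → V →ₗ[ℝ] V} (hA : ∀ x u v, Γ.g x (A x u) v = -Γ.g x u (A x v))
    (Z X Y : M → V) (x : M) :
    Γ.g x (covDer Γ A Z X x) (Y x) + Γ.g x (X x) (covDer Γ A Z Y x) = 0 := by
  have hsum : (fun y => Γ.g y (tapp A X y) (Y y)) + (fun y => Γ.g y (X y) (tapp A Y y)) =
      fun _ => 0 := by
    funext y
    simp [tapp, hA]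
  have hD := congrFun (congrArg (Γ.D Z) hsum) x
  rw [Γ.D_add_fun, Γ.metric_compat, Γ.metric_compat, Γ.D_const] at hD
  simp only [Pi.add_apply, Pi.zero_apply, tapp, hA] at hD
  simp only [covDer, map_sub, LinearMap.sub_apply, hA]
  linarith

def nablaAt (Y : M → V) (x : M) : V →ₗ[ℝ] V where
  toFun u := Γ.nabla (cst M u) Y x
  map_add' u v := congrFun (Γ.nabla_add_left (cst M u) (cst M v) Y) x
  map_smul' c u := congrFun (Γ.nabla_smul_left (fun _ => c) (cst M u) Y) x

theorem nablaAt_apply (Y : M → V) (x : M) (u : V) : Γ.nablaAt Y x u = Γ.nabla (cst M u) Y x :=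
  rfl

end RGeo

namespace RGeo.ACMS

variable {M V : Type} [AddCommGroup V] [Module ℝ V] {Γ : RGeo M V} (S : ACMS Γ) (x : M)

theorem phi_xi : S.phi x (S.xi x) = 0 := by
  set c := S.eta x (S.phi x (S.xi x))
  have hφ₂ : S.phi x (S.phi x (S.xi x)) = 0 := by simp [S.phi_sq, S.eta_xi]
  have hφ : S.phi x (S.xi x) = c • S.xi x := by
    have h := S.phi_sq x (S.phi x (S.xi x))
    rw [hφ₂, map_zero] at h
    exact neg_add_eq_zero.mp h.symm
  have hc : (c * c) • S.xi x = 0 := by rw [mul_smul, ← hφ, ← map_smul, ← hφ, hφ₂]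
  have hc : c * c = 0 := by simpa [S.eta_xi] using congrArg (S.eta x) hc
  rw [hφ, mul_self_eq_zero.mp hc, zero_smul]

theorem eta_phi (v : V) : S.eta x (S.phi x v) = 0 := by
  have h := S.phi_sq x (S.phi x v)
  rw [S.phi_sq x v, map_add, map_neg, map_smul, phi_xi, smul_zero, add_zero] at h
  have : S.eta x (S.phi x v) • S.xi x = 0 := by simpa using h
  simpa [S.eta_xi] using congrArg (S.eta x) this

theorem g_xi (v : V) : Γ.g x (S.xi x) v = S.eta x v := by
  have h := S.metric_phi x (S.xi x) v
  rw [phi_xi, map_zero, LinearMap.zero_apply, S.eta_xi, one_mul] at h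
  linarith

theorem g_phi (u v : V) : Γ.g x (S.phi x u) v = -Γ.g x u (S.phi x v) := by
  have h := S.metric_phi x u (S.phi x v)
  rw [S.phi_sq, eta_phi, mul_zero, sub_zero, map_add, map_neg, map_smul, Γ.g_symm x _ (S.xi x),
    g_xi, eta_phi, smul_zero, add_zero] at h
  linarith

theorem eta_nabla_xi (X : M → V) : S.eta x (Γ.nabla X S.xi x) = 0 := by
  have h := congrFun (Γ.metric_compat X S.xi S.xi) x
  simp only [g_xi, S.eta_xi, Γ.D_const, Pi.zero_apply] at h
  rw [Γ.g_symm x (Γ.nabla X S.xi x), g_xi] at h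
  linarith

theorem covDer_phi_apply_xi (X : M → V) :
    covDer Γ S.phi X S.xi x = -S.phi x (Γ.nabla X S.xi x) := by
  have : tapp S.phi S.xi = 0 := funext fun y => S.phi_xi y
  simp [covDer, this, Γ.nabla_zero]

def dEtaAt : V →ₗ[ℝ] V →ₗ[ℝ] ℝ :=
  (Γ.g x).comp (Γ.nablaAt S.xi x) - ((Γ.g x).comp (Γ.nablaAt S.xi x)).flip

theorem dEtaAt_apply (u w : V) :
    S.dEtaAt x u w = Γ.g x (Γ.nablaAt S.xi x u) w - Γ.g x (Γ.nablaAt S.xi x w) u := rfl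

theorem dEtaAt_isAlt : (S.dEtaAt x).IsAlt := fun u => by simp [dEtaAt_apply]

theorem dOne_etaf_cst (u w : V) :
    dOne Γ S.etaf (cst M u) (cst M w) x = S.dEtaAt x u w := by
  have hη : ∀ Y, S.etaf Y = fun y => Γ.g y (S.xi y) (Y y) :=
    fun Y => funext fun y => (S.g_xi y (Y y)).symm
  have hlie := congrFun (Γ.torsion_free (cst M u) (cst M w)) x
  simp only [dOne, Pi.sub_apply, hη, Γ.metric_compat]
  simp only [← hlie, S.g_xi, map_sub, dEtaAt_apply, Γ.nablaAt_apply, cst]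
  ring

theorem finrank_ker_eta_add_one [FiniteDimensional ℝ V] :
    Module.finrank ℝ (LinearMap.ker (S.eta x)) + 1 = Module.finrank ℝ V := by
  have hsurj : Function.Surjective (S.eta x) := fun c => ⟨c • S.xi x, by simp [S.eta_xi]⟩
  have := LinearMap.finrank_range_add_finrank_ker (S.eta x)
  rw [LinearMap.range_eq_top.mpr hsurj, finrank_top, Module.finrank_self] at this
  omega

end RGeo.ACMS

namespace RGeo.ACMS.IsNearlySasakian

variable {M V : Type} [AddCommGroup V] [Module ℝ V] {Γ : RGeo M V} {S : ACMS Γ}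
  (hNS : S.IsNearlySasakian)
include hNS

theorem nabla_xi_xi (x : M) : Γ.nabla S.xi S.xi x = 0 := by
  have h := hNS S.xi S.xi x
  rw [S.covDer_phi_apply_xi, S.g_xi, S.eta_xi] at h
  have hφ : (2 : ℝ) • S.phi x (Γ.nabla S.xi S.xi x) = 0 := by
    linear_combination (norm := module) -h
  have h₂ := S.phi_sq x (Γ.nabla S.xi S.xi x)
  rw [(smul_eq_zero.mp hφ).resolve_left two_ne_zero, map_zero, S.eta_nabla_xi, zero_smul,
    add_zero] at h₂
  exact neg_eq_zero.mp h₂.symm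

theorem covDer_phi_xi_apply_phi (Y : M → V) (x : M) :
    covDer Γ S.phi S.xi (tapp S.phi Y) x = -S.phi x (covDer Γ S.phi S.xi Y x) := by
  have hφφ : tapp S.phi (tapp S.phi Y) =
      (fun y => (-1 : ℝ) • Y y) + fun y => S.etaf Y y • S.xi y := by
    funext y
    simp [tapp, ACMS.etaf, S.phi_sq]
  have hη : Γ.D S.xi (S.etaf Y) = fun y => S.eta y (Γ.nabla S.xi Y y) := by
    have : S.etaf Y = fun y => Γ.g y (S.xi y) (Y y) := funext fun y => (S.g_xi y (Y y)).symm
    rw [this, Γ.metric_compat]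
    simp [hNS.nabla_xi_xi, S.g_xi]
  simp only [covDer, map_sub, hφφ, Γ.nabla_add_right, Pi.add_apply, Γ.nabla_const_smul,
    Γ.nabla_leibniz, hη, hNS.nabla_xi_xi, S.phi_sq]
  module

theorem nabla_xi (X : M → V) (x : M) :
    Γ.nabla X S.xi x = -S.phi x (X x) - S.phi x (covDer Γ S.phi S.xi X x) := by
  have h := hNS X S.xi x
  rw [S.covDer_phi_apply_xi, Γ.g_symm, S.g_xi, S.eta_xi] at h
  have h₁ : S.phi x (Γ.nabla X S.xi x) =
      covDer Γ S.phi S.xi X x - S.eta x (X x) • S.xi x + X x := by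
    linear_combination (norm := module) -h
  have h₂ := congrArg (S.phi x) h₁
  rw [S.phi_sq, S.eta_nabla_xi, map_add, map_sub, map_smul, S.phi_xi] at h₂
  linear_combination (norm := module) -h₂

theorem killing_xi (X Y : M → V) (x : M) :
    Γ.g x (Γ.nabla X S.xi x) (Y x) + Γ.g x (Γ.nabla Y S.xi x) (X x) = 0 := by
  have hC := Γ.covDer_skew S.g_phi S.xi X (tapp S.phi Y) x
  rw [hNS.covDer_phi_xi_apply_phi] at hC
  simp only [hNS.nabla_xi, tapp, map_sub, map_neg, LinearMap.sub_apply, LinearMap.neg_apply,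
    S.g_phi] at hC ⊢
  linarith [Γ.g_symm x (Y x) (S.phi x (X x)), S.g_phi x (X x) (Y x),
    Γ.g_symm x (covDer Γ S.phi S.xi Y x) (S.phi x (X x)),
    S.g_phi x (X x) (covDer Γ S.phi S.xi Y x)]

theorem g_le_g_nabla_xi (X : M → V) (x : M) (hX : S.eta x (X x) = 0) :
    Γ.g x (X x) (X x) ≤ Γ.g x (Γ.nabla X S.xi x) (Γ.nabla X S.xi x) := by
  have hC := Γ.covDer_skew S.g_phi S.xi X X x
  rw [Γ.g_symm x (covDer Γ S.phi S.xi X x)] at hC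
  simp only [hNS.nabla_xi, map_sub, map_neg, LinearMap.sub_apply, LinearMap.neg_apply,
    S.metric_phi, hX, zero_mul, mul_zero, sub_zero]
  have hφC := Γ.g_self_nonneg x (S.phi x (covDer Γ S.phi S.xi X x))
  rw [S.metric_phi] at hφC
  linarith [Γ.g_symm x (covDer Γ S.phi S.xi X x) (X x)]

theorem dEtaAt_ker_separatingLeft (x : M) :
    ((S.dEtaAt x).compl₁₂ (LinearMap.ker (S.eta x)).subtype
      (LinearMap.ker (S.eta x)).subtype).SeparatingLeft := by
  rintro ⟨u, hu⟩ h
  by_contra hne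
  have hu₀ : u ≠ 0 := fun h => hne (Subtype.ext h)
  have h₁ := h ⟨Γ.nablaAt S.xi x u, S.eta_nabla_xi x _⟩
  have h₂ := hNS.killing_xi (cst M (Γ.nablaAt S.xi x u)) (cst M u) x
  have h₃ := hNS.g_le_g_nabla_xi (cst M u) x hu
  simp only [LinearMap.compl₁₂_apply, Submodule.subtype_apply, dEtaAt_apply] at h₁
  simp only [Γ.nablaAt_apply, cst] at h₁ h₂ h₃
  linarith [Γ.g_posdef x u hu₀]

end RGeo.ACMS.IsNearlySasakian

open RGeo in
/-- The alternating sum is a positive multiple of `(η ∧ (dη)ⁿ)(v₀, …, v₂ₙ)`. -/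
theorem nearlySasakian_is_contact {M V : Type} [AddCommGroup V] [Module ℝ V]
    [FiniteDimensional ℝ V]
    (Γ : RGeo M V) (S : ACMS Γ) (n : ℕ)
    (hdim : Module.finrank ℝ V = 2 * n + 1)
    (hNS : S.IsNearlySasakian) :
    ∀ x : M, ∃ v : Fin (2 * n + 1) → V,
      (∑ σ : Equiv.Perm (Fin (2 * n + 1)),
        ((Equiv.Perm.sign σ : ℤ) : ℝ) *
          (S.eta x (v (σ ⟨0, by omega⟩)) *
            ∏ i : Fin n,
              dOne Γ S.etaf
                (cst M (v (σ ⟨2 * (i : ℕ) + 1, by have := i.isLt; omega⟩)))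
                (cst M (v (σ ⟨2 * (i : ℕ) + 2, by have := i.isLt; omega⟩))) x)) ≠ 0 := by
  intro x
  let K := LinearMap.ker (S.eta x)
  have hK : Module.finrank ℝ K + 1 = _ := S.finrank_ker_eta_add_one x
  obtain ⟨b, hb⟩ :=
    LinearMap.exists_darboux_frame (B := (S.dEtaAt x).compl₁₂ K.subtype K.subtype)
      (fun z => S.dEtaAt_isAlt x z) (hNS.dEtaAt_ker_separatingLeft x) n (by omega)
  let v : Fin (2 * n + 1) → V := Fin.cons (S.xi x) fun k => (b ((finPairEquiv n).symm k) : V)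
  refine ⟨v, ne_of_gt ?_⟩
  simp only [S.dOne_etaf_cst]
  exact sum_sign_mul_prod_pos (fun k => S.eta x (v k)) (fun k l => S.dEtaAt x (v k) (v l))
    (by simp [v, S.eta_xi]) (fun k => (b ((finPairEquiv n).symm k)).2)
    (fun p q => by simpa [v] using hb p q)
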